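/- arXiv:2308.06214 — 9 statements merged into one kernel-verified Lean document; each statement's English description precedes it below -/
import Mathlib

section
/- Let G be a group, T an element of the center of G, P a subset of G, and K an integer such that for every β ∈ G either β ∈ P or β⁻¹T^K ∈ P. Then there is at most one homogeneous quasimorphism f : G → ℝ such that f(T) = 1 and f is bounded below on P; that is, if f and g are homogeneous quasimorphisms with f(T) = g(T) = 1 and there are constants C, C' ∈ ℝ with f(β) ≥ C and g(β) ≥ C' for all β ∈ P, then f = g. -/
theorem dtc_aux {G : Type*} [Group G] (T : G) (hT : T ∈ Subgroup.center G)
    (P : Set G) (K : ℤ)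
    (htot : ∀ β : G, β ∈ P ∨ β⁻¹ * T ^ K ∈ P)
    (f g : G → ℝ) (Df Dg : ℝ)
    (hfq : ∀ a b : G, |f (a * b) - f a - f b| ≤ Df)
    (hgq : ∀ a b : G, |g (a * b) - g a - g b| ≤ Dg)
    (hfh : ∀ (x : G) (k : ℤ), f (x ^ k) = k * f x)
    (hgh : ∀ (x : G) (k : ℤ), g (x ^ k) = k * g x)
    (hfT : f T = 1) (hgT : g T = 1)
    (Cf Cg : ℝ) (hfb : ∀ β ∈ P, Cf ≤ f β) (hgb : ∀ β ∈ P, Cg ≤ g β)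
    (α : G) : ¬ f α < g α := by
  intro hlt
  set a := f α with ha
  set b := g α with hb
  have hδ : 0 < b - a := by linarith
  -- choose n large
  obtain ⟨n, hn⟩ := exists_nat_gt
    ((2 * (max (1 + Df - Cf) ((K : ℝ) + Dg - Cg) + 1)) / (b - a))
  have hn' : (n : ℝ) * (b - a) / 2 > max (1 + Df - Cf) ((K : ℝ) + Dg - Cg) + 1 := by
    rw [gt_iff_lt, lt_div_iff₀ (by norm_num : (0:ℝ) < 2)]
    calc (max (1 + Df - Cf) ((K : ℝ) + Dg - Cg) + 1) * 2
        = ((2 * (max (1 + Df - Cf) ((K : ℝ) + Dg - Cg) + 1)) / (b - a)) * (b - a) := by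
          field_simp
      _ < (n : ℝ) * (b - a) := by
          exact mul_lt_mul_of_pos_right hn hδ
  set m : ℤ := ⌊(n : ℝ) * (a + b) / 2⌋ with hm
  have hm1 : (m : ℝ) ≤ (n : ℝ) * (a + b) / 2 := Int.floor_le _
  have hm2 : (n : ℝ) * (a + b) / 2 < (m : ℝ) + 1 := Int.lt_floor_add_one _
  have hcT : ∀ x : G, Commute x T := fun x => Subgroup.mem_center_iff.mp hT x
  set β : G := α ^ (n : ℤ) * T ^ (-(m : ℤ)) with hβ
  have key : β⁻¹ * T ^ K = α ^ (-(n : ℤ)) * T ^ ((m : ℤ) + K) := by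
    have hcm : T ^ (m:ℤ) * α ^ (-(n:ℤ)) = α ^ (-(n:ℤ)) * T ^ (m:ℤ) :=
      (((hcT (α ^ (-(n:ℤ)))).zpow_right m).symm).eq
    calc β⁻¹ * T ^ K = T ^ (m:ℤ) * α ^ (-(n:ℤ)) * T ^ K := by
          rw [hβ, mul_inv_rev, ← zpow_neg, ← zpow_neg, neg_neg]
      _ = α ^ (-(n:ℤ)) * T ^ (m:ℤ) * T ^ K := by rw [hcm]
      _ = α ^ (-(n:ℤ)) * T ^ ((m:ℤ) + K) := by rw [mul_assoc, ← zpow_add]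
  rcases htot β with hP | hP
  · -- f β ≥ Cf, but f β ≤ n a - m + Df and n a - m ≤ -n(b-a)/2 + 1
    have h1 : Cf ≤ f β := hfb β hP
    have h2 : |f β - f (α ^ (n:ℤ)) - f (T ^ (-(m:ℤ)))| ≤ Df := hfq _ _
    have h3 : f (α ^ (n:ℤ)) = (n : ℝ) * a := by rw [hfh]; push_cast; ring
    have h4 : f (T ^ (-(m:ℤ))) = -(m : ℝ) := by rw [hfh, hfT]; push_cast; ring
    rw [h3, h4] at h2
    have h5 : f β ≤ (n : ℝ) * a - (m : ℝ) + Df := by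
      have := abs_le.mp h2
      linarith [this.2]
    have h6 : (n : ℝ) * a - (m : ℝ) ≤ 1 - (n : ℝ) * (b - a) / 2 := by nlinarith
    have := le_max_left (1 + Df - Cf) ((K : ℝ) + Dg - Cg)
    linarith
  · rw [key] at hP
    have h1 : Cg ≤ g (α ^ (-(n:ℤ)) * T ^ ((m : ℤ) + K)) := hgb _ hP
    have h2 : |g (α ^ (-(n:ℤ)) * T ^ ((m:ℤ) + K)) - g (α ^ (-(n:ℤ)))
        - g (T ^ ((m:ℤ) + K))| ≤ Dg := hgq _ _
    have h3 : g (α ^ (-(n:ℤ))) = -(n : ℝ) * b := by rw [hgh]; push_cast; ring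
    have h4 : g (T ^ ((m:ℤ) + K)) = (m : ℝ) + (K : ℝ) := by
      rw [hgh, hgT]; push_cast; ring
    rw [h3, h4] at h2
    have h5 : g (α ^ (-(n:ℤ)) * T ^ ((m:ℤ) + K))
        ≤ -(n : ℝ) * b + ((m : ℝ) + (K : ℝ)) + Dg := by
      have := abs_le.mp h2
      linarith [this.2]
    have h6 : (n : ℝ) * (b - a) / 2 ≤ (n : ℝ) * b - (m : ℝ) := by nlinarith
    have := le_max_right (1 + Df - Cf) ((K : ℝ) + Dg - Cg)
    linarith

/-- Uniqueness of a homogeneous quasimorphism with `f T = 1` that is bounded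
below on the set of positive elements `P`, given the coarse totality condition. -/
theorem dtc_uniqueness {G : Type*} [Group G] (T : G) (hT : T ∈ Subgroup.center G)
    (P : Set G) (K : ℤ)
    (htot : ∀ β : G, β ∈ P ∨ β⁻¹ * T ^ K ∈ P)
    (f g : G → ℝ)
    (hfq : ∃ D : ℝ, 0 ≤ D ∧ ∀ a b : G, |f (a * b) - f a - f b| ≤ D)
    (hgq : ∃ D : ℝ, 0 ≤ D ∧ ∀ a b : G, |g (a * b) - g a - g b| ≤ D)
    (hfh : ∀ (x : G) (k : ℤ), f (x ^ k) = k * f x)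
    (hgh : ∀ (x : G) (k : ℤ), g (x ^ k) = k * g x)
    (hfT : f T = 1) (hgT : g T = 1)
    (hfb : ∃ C : ℝ, ∀ β ∈ P, C ≤ f β)
    (hgb : ∃ C : ℝ, ∀ β ∈ P, C ≤ g β) :
    f = g := by
  obtain ⟨Df, _, hfq⟩ := hfq
  obtain ⟨Dg, _, hgq⟩ := hgq
  obtain ⟨Cf, hfb⟩ := hfb
  obtain ⟨Cg, hgb⟩ := hgb
  funext α
  refine le_antisymm ?_ ?_
  · exact not_lt.mp (dtc_aux T hT P K htot g f Dg Df hgq hfq hgh hfh hgT hfT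
      Cg Cf hgb hfb α)
  · exact not_lt.mp (dtc_aux T hT P K htot f g Df Dg hfq hgq hfh hgh hfT hgT
      Cf Cg hfb hgb α)
end

section
/- Let G be a group, T an element of the center of G, P a subset of G, and K an integer such that: (totality) for every β ∈ G either β ∈ P or β⁻¹T^K ∈ P; (transitivity) P is multiplicatively closed, i.e. a, b ∈ P implies ab ∈ P; (Archimedean) for every β ∈ G there is an integer k_β with β⁻¹T^{k_β} ∈ P and β⁻¹T^l ∉ P for every integer l ≤ −k_β. Then there exists a homogeneous quasimorphism f : G → ℝ such that f(T) = 1, f(β) ≥ 0 for all β ∈ P, and |f(ab) − f(a) − f(b)| ≤ K + 1 for all a, b ∈ G (so the defect of f is at most K + 1). -/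
/-!
Let `ν g` be the least `k` with `g ≼ T^k`. Centrality of `T` and transitivity make `ν` subadditive,
and totality gives `ν g + ν g⁻¹ ≤ K + 1`. The homogenization `f g = lim ν (g^n) / n` (Fekete) is
then homogeneous and conjugation invariant with `f ≤ ν ≤ f + K + 1`. Writing `b^{-n} (ab)^n` as
a product of `n` conjugates of `a` bounds `ν ((ab)^n)` by `ν (b^n) + n (f a + K + 1)` up to a
constant, which gives the defect bound after dividing by `n`.
-/

open Filter Topology

section Homogenization

variable {G : Type*} [Group G] {ν : G → ℝ} {C : ℝ}

noncomputable def homogenization (ν : G → ℝ) (g : G) : ℝ :=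
  limUnder atTop fun n : ℕ => ν (g ^ n) / n

lemma le_add_of_tendsto_div {u v : ℕ → ℝ} {x y c M : ℝ}
    (hu : Tendsto (fun n : ℕ => u n / n) atTop (𝓝 x))
    (hv : Tendsto (fun n : ℕ => v n / n) atTop (𝓝 y))
    (h : ∀ n : ℕ, u n ≤ v n + c + n * M) : x ≤ y + M := by
  have hrhs : Tendsto (fun n : ℕ => v n / n + c / n + M) atTop (𝓝 (y + 0 + M)) :=
    (hv.add (tendsto_const_div_atTop_nhds_zero_nat c)).add_const M
  rw [add_zero] at hrhs
  refine le_of_tendsto_of_tendsto hu hrhs ?_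
  filter_upwards [eventually_gt_atTop 0] with n hn
  have hn' : (0 : ℝ) < n := Nat.cast_pos.mpr hn
  rw [← add_div, div_add' _ _ _ hn'.ne', div_le_div_iff_of_pos_right hn']
  linarith [h n]

lemma pow_le_of_subadditive (hsub : ∀ a b, ν (a * b) ≤ ν a + ν b) (g : G) (n : ℕ) :
    ν (g ^ n) ≤ ν 1 + n * ν g := by
  induction n with
  | zero => simp
  | succ n ih =>
    calc ν (g ^ (n + 1)) ≤ ν (g ^ n) + ν g := pow_succ g n ▸ hsub _ _
      _ ≤ ν 1 + (n + 1 : ℕ) * ν g := by push_cast; linarith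

lemma bddBelow_pow_div_of_subadditive (hsub : ∀ a b, ν (a * b) ≤ ν a + ν b) (g : G) :
    BddBelow (Set.range fun n : ℕ => ν (g ^ n) / n) := by
  refine ⟨min 0 (-ν g⁻¹), ?_⟩
  rintro _ ⟨n, rfl⟩
  rcases Nat.eq_zero_or_pos n with rfl | hn
  · simp
  have hn' : (0 : ℝ) < n := Nat.cast_pos.mpr hn
  have hone : ν 1 ≤ ν (g ^ n) + ν (g⁻¹ ^ n) := by
    simpa [inv_pow] using hsub (g ^ n) (g⁻¹ ^ n)
  have hpow := pow_le_of_subadditive hsub g⁻¹ n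
  refine (min_le_right _ _).trans ?_
  rw [le_div_iff₀ hn']
  linarith

lemma tendsto_homogenization (hsub : ∀ a b, ν (a * b) ≤ ν a + ν b) (g : G) :
    Tendsto (fun n : ℕ => ν (g ^ n) / n) atTop (𝓝 (homogenization ν g)) := by
  have hu : Subadditive fun n : ℕ => ν (g ^ n) := fun m n => by
    simpa only [pow_add] using hsub (g ^ m) (g ^ n)
  exact tendsto_nhds_limUnder ⟨_, hu.tendsto_lim (bddBelow_pow_div_of_subadditive hsub g)⟩

lemma homogenization_eq_of_pow_eq (hsub : ∀ a b, ν (a * b) ≤ ν a + ν b) {g : G} {c d : ℝ}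
    (h : ∀ n : ℕ, ν (g ^ n) = c + n * d) : homogenization ν g = d := by
  refine tendsto_nhds_unique (tendsto_homogenization hsub g) ?_
  have hlim : Tendsto (fun n : ℕ => c / n + d) atTop (𝓝 (0 + d)) :=
    (tendsto_const_div_atTop_nhds_zero_nat c).add_const d
  rw [zero_add] at hlim
  refine hlim.congr' ?_
  filter_upwards [eventually_gt_atTop 0] with n hn
  rw [h, add_div, mul_div_cancel_left₀ _ (Nat.cast_pos.mpr hn).ne']

lemma homogenization_le (hsub : ∀ a b, ν (a * b) ≤ ν a + ν b) (g : G) :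
    homogenization ν g ≤ ν g := by
  have hzero : Tendsto (fun n : ℕ => (0 : ℝ) / n) atTop (𝓝 0) := by
    simp
  simpa using le_add_of_tendsto_div (tendsto_homogenization hsub g) hzero
    fun n => by simpa using pow_le_of_subadditive hsub g n

lemma homogenization_conj_le (hsub : ∀ a b, ν (a * b) ≤ ν a + ν b) (w g : G) :
    homogenization ν (w * g * w⁻¹) ≤ homogenization ν g := by
  refine (le_add_of_tendsto_div (M := 0) (c := ν w + ν w⁻¹) (tendsto_homogenization hsub _)
    (tendsto_homogenization hsub g) fun n => ?_).trans_eq (add_zero _)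
  rw [conj_pow]
  linarith [hsub (w * g ^ n) w⁻¹, hsub w (g ^ n)]

lemma homogenization_conj (hsub : ∀ a b, ν (a * b) ≤ ν a + ν b) (w g : G) :
    homogenization ν (w * g * w⁻¹) = homogenization ν g := by
  refine le_antisymm (homogenization_conj_le hsub w g) ?_
  simpa [mul_assoc] using homogenization_conj_le hsub w⁻¹ (w * g * w⁻¹)

lemma homogenization_inv (hsub : ∀ a b, ν (a * b) ≤ ν a + ν b) (hinv : ∀ g, ν g + ν g⁻¹ ≤ C)
    (g : G) : homogenization ν g⁻¹ = -homogenization ν g := by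
  have hsum : Tendsto (fun n : ℕ => (ν (g ^ n) + ν (g⁻¹ ^ n)) / n) atTop
      (𝓝 (homogenization ν g + homogenization ν g⁻¹)) := by
    simpa only [add_div] using (tendsto_homogenization hsub g).add (tendsto_homogenization hsub g⁻¹)
  have hzero : Tendsto (fun n : ℕ => (0 : ℝ) / n) atTop (𝓝 0) := by
    simp
  have hupper := le_add_of_tendsto_div (c := C) (M := 0) hsum hzero fun n => by
    simpa [inv_pow] using hinv (g ^ n)
  have hlower := le_add_of_tendsto_div (c := -ν 1) (M := 0) hzero hsum fun n => by
    simpa [inv_pow] using hsub (g ^ n) (g⁻¹ ^ n)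
  linarith

lemma le_homogenization_add (hsub : ∀ a b, ν (a * b) ≤ ν a + ν b) (hinv : ∀ g, ν g + ν g⁻¹ ≤ C)
    (g : G) : ν g ≤ homogenization ν g + C := by
  linarith [hinv g, homogenization_le hsub g⁻¹, homogenization_inv hsub hinv g]

lemma homogenization_pow (hsub : ∀ a b, ν (a * b) ≤ ν a + ν b) (g : G) (m : ℕ) :
    homogenization ν (g ^ m) = m * homogenization ν g := by
  rcases Nat.eq_zero_or_pos m with rfl | hm
  · simpa using homogenization_eq_of_pow_eq hsub (g := 1) (c := ν 1) (d := 0) (by simp)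
  have hm' : (m : ℝ) ≠ 0 := (Nat.cast_pos.mpr hm).ne'
  have hsubseq := ((tendsto_homogenization hsub g).comp
    (tendsto_id.const_mul_atTop' hm)).const_mul (m : ℝ)
  refine tendsto_nhds_unique (tendsto_homogenization hsub (g ^ m)) (hsubseq.congr fun n => ?_)
  simp only [Function.comp_apply, id, ← pow_mul, Nat.cast_mul]
  rw [mul_div_assoc', mul_div_mul_left _ _ hm']

lemma homogenization_zpow (hsub : ∀ a b, ν (a * b) ≤ ν a + ν b) (hinv : ∀ g, ν g + ν g⁻¹ ≤ C)
    (g : G) (k : ℤ) : homogenization ν (g ^ k) = k * homogenization ν g := by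
  cases k with
  | ofNat m => simpa using homogenization_pow hsub g m
  | negSucc m =>
    rw [zpow_negSucc, homogenization_inv hsub hinv, homogenization_pow hsub, Int.cast_negSucc]
    ring

/-- `b^{-n} (ab)^n` is the product of the conjugates `b^{-i} a b^i`, `i = n, …, 1`. -/
lemma inv_pow_mul_mul_pow_le (hsub : ∀ a b, ν (a * b) ≤ ν a + ν b) {a : G} {M : ℝ}
    (ha : ∀ w, ν (w * a * w⁻¹) ≤ M) (b : G) (n : ℕ) :
    ν ((b ^ n)⁻¹ * (a * b) ^ n) ≤ ν 1 + n * M := by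
  induction n with
  | zero => simp
  | succ n ih =>
    set w := (b ^ (n + 1))⁻¹
    have hsplit : w * (a * b) ^ (n + 1) = (w * a * w⁻¹) * ((b ^ n)⁻¹ * (a * b) ^ n) := by
      rw [pow_succ' (a * b), mul_assoc a]
      simp only [w]
      generalize (a * b) ^ n = x
      group
    rw [hsplit]
    push_cast
    linarith [hsub (w * a * w⁻¹) ((b ^ n)⁻¹ * (a * b) ^ n), ha w]

lemma homogenization_mul_le (hsub : ∀ a b, ν (a * b) ≤ ν a + ν b) (hinv : ∀ g, ν g + ν g⁻¹ ≤ C)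
    (a b : G) : homogenization ν (a * b) ≤ homogenization ν a + homogenization ν b + C := by
  have ha : ∀ w, ν (w * a * w⁻¹) ≤ homogenization ν a + C := fun w => by
    simpa only [homogenization_conj hsub] using le_homogenization_add hsub hinv (w * a * w⁻¹)
  have hlim := le_add_of_tendsto_div (c := ν 1) (M := homogenization ν a + C)
    (tendsto_homogenization hsub (a * b)) (tendsto_homogenization hsub b) fun n => by
      have hsplit := hsub (b ^ n) ((b ^ n)⁻¹ * (a * b) ^ n)
      rw [mul_inv_cancel_left] at hsplit
      linarith [inv_pow_mul_mul_pow_le hsub ha b n]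
  linarith

lemma abs_homogenization_mul_sub_le (hsub : ∀ a b, ν (a * b) ≤ ν a + ν b)
    (hinv : ∀ g, ν g + ν g⁻¹ ≤ C) (a b : G) :
    |homogenization ν (a * b) - homogenization ν a - homogenization ν b| ≤ C := by
  have hlower := homogenization_mul_le hsub hinv b⁻¹ a⁻¹
  rw [← mul_inv_rev] at hlower
  simp only [homogenization_inv hsub hinv] at hlower
  rw [abs_le]
  constructor <;> linarith [homogenization_mul_le hsub hinv a b]

end Homogenization

section LeastExponent

variable {G : Type*} [Group G] {T : G} {P : Set G}

def IsArchimedeanFor (T : G) (P : Set G) : Prop :=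
  ∀ β : G, ∃ k : ℤ, β⁻¹ * T ^ k ∈ P ∧ ∀ l : ℤ, l ≤ -k → β⁻¹ * T ^ l ∉ P

noncomputable def leastExponent (T : G) (P : Set G) (g : G) : ℤ :=
  sInf {k : ℤ | g⁻¹ * T ^ k ∈ P}

lemma IsArchimedeanFor.nonempty (harch : IsArchimedeanFor T P) (g : G) :
    {k : ℤ | g⁻¹ * T ^ k ∈ P}.Nonempty :=
  let ⟨k, hk, _⟩ := harch g
  ⟨k, hk⟩

lemma IsArchimedeanFor.bddBelow (harch : IsArchimedeanFor T P) (g : G) :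
    BddBelow {k : ℤ | g⁻¹ * T ^ k ∈ P} := by
  obtain ⟨k, -, hbd⟩ := harch g
  refine ⟨1 - k, fun l hl => ?_⟩
  by_contra h
  exact hbd l (by omega) hl

lemma leastExponent_mem (harch : IsArchimedeanFor T P) (g : G) :
    g⁻¹ * T ^ leastExponent T P g ∈ P :=
  Int.csInf_mem (harch.nonempty g) (harch.bddBelow g)

lemma leastExponent_le (harch : IsArchimedeanFor T P) {g : G} {k : ℤ} (h : g⁻¹ * T ^ k ∈ P) :
    leastExponent T P g ≤ k :=
  csInf_le (harch.bddBelow g) h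

lemma leastExponent_mul_le (hT : T ∈ Subgroup.center G)
    (hmul : ∀ a b : G, a ∈ P → b ∈ P → a * b ∈ P) (harch : IsArchimedeanFor T P) (g h : G) :
    leastExponent T P (g * h) ≤ leastExponent T P g + leastExponent T P h := by
  set m := leastExponent T P g
  set n := leastExponent T P h
  have hcomm : g⁻¹ * T ^ m * T ^ n = T ^ n * (g⁻¹ * T ^ m) :=
    Subgroup.mem_center_iff.mp (zpow_mem hT n) _
  have hsplit : (g * h)⁻¹ * T ^ (m + n) = (h⁻¹ * T ^ n) * (g⁻¹ * T ^ m) := by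
    rw [mul_assoc h⁻¹, ← hcomm]
    group
  exact leastExponent_le harch
    (hsplit ▸ hmul _ _ (leastExponent_mem harch h) (leastExponent_mem harch g))

lemma leastExponent_add_inv_le (hT : T ∈ Subgroup.center G) {K : ℤ}
    (htot : ∀ β : G, β ∈ P ∨ β⁻¹ * T ^ K ∈ P) (harch : IsArchimedeanFor T P) (g : G) :
    leastExponent T P g + leastExponent T P g⁻¹ ≤ K + 1 := by
  set m := leastExponent T P g
  rcases htot (g⁻¹ * T ^ (m - 1)) with hmem | hmem
  · have := leastExponent_le harch hmem
    omega
  · have hshift : (g⁻¹ * T ^ (m - 1))⁻¹ * T ^ K = g⁻¹⁻¹ * T ^ (K - m + 1) := by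
      rw [mul_inv_rev, inv_inv, ← zpow_neg, ← Subgroup.mem_center_iff.mp (zpow_mem hT _) g]
      group
    have := leastExponent_le harch (hshift ▸ hmem)
    omega

lemma leastExponent_zpow_self (harch : IsArchimedeanFor T P) (k : ℤ) :
    leastExponent T P (T ^ k) = leastExponent T P 1 + k := by
  have hshift : ∀ j : ℤ, (T ^ k)⁻¹ * T ^ j = (1 : G)⁻¹ * T ^ (j - k) := fun j => by
    rw [inv_one, one_mul, ← zpow_neg, ← zpow_add, neg_add_eq_sub]
  apply le_antisymm
  · exact leastExponent_le harch (by rw [hshift, add_sub_cancel_right]; exact leastExponent_mem harch 1)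
  · have := leastExponent_le harch ((hshift _).symm ▸ leastExponent_mem harch (T ^ k))
    omega

lemma leastExponent_inv_nonpos (harch : IsArchimedeanFor T P) {β : G} (hβ : β ∈ P) :
    leastExponent T P β⁻¹ ≤ 0 :=
  leastExponent_le harch (by simpa using hβ)

end LeastExponent

/-- Existence of a homogeneous quasimorphism with `f T = 1`, nonnegative on the
set of positive elements `P`, and of defect at most `K + 1`, given totality,
transitivity and the Archimedean property. -/
theorem dtc_existence {G : Type*} [Group G] (T : G) (hT : T ∈ Subgroup.center G)
    (P : Set G) (K : ℤ)
    (htot : ∀ β : G, β ∈ P ∨ β⁻¹ * T ^ K ∈ P)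
    (hmul : ∀ a b : G, a ∈ P → b ∈ P → a * b ∈ P)
    (harch : ∀ β : G, ∃ k : ℤ, β⁻¹ * T ^ k ∈ P ∧ ∀ l : ℤ, l ≤ -k → β⁻¹ * T ^ l ∉ P) :
    ∃ f : G → ℝ,
      (∀ (x : G) (k : ℤ), f (x ^ k) = k * f x) ∧
      f T = 1 ∧
      (∀ β ∈ P, 0 ≤ f β) ∧
      (∀ a b : G, |f (a * b) - f a - f b| ≤ (K : ℝ) + 1) := by
  set ν : G → ℝ := fun g => leastExponent T P g
  have hsub : ∀ a b, ν (a * b) ≤ ν a + ν b := fun a b => by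
    simp only [ν]
    exact_mod_cast leastExponent_mul_le hT hmul harch a b
  have hinv : ∀ g, ν g + ν g⁻¹ ≤ (K : ℝ) + 1 := fun g => by
    simp only [ν]
    exact_mod_cast leastExponent_add_inv_le hT htot harch g
  refine ⟨homogenization ν, homogenization_zpow hsub hinv, ?_, fun β hβ => ?_,
    abs_homogenization_mul_sub_le hsub hinv⟩
  · refine homogenization_eq_of_pow_eq hsub (c := ν 1) fun n => ?_
    simp [ν, ← zpow_natCast, leastExponent_zpow_self harch]
  · have hle : ν β⁻¹ ≤ 0 := by simp only [ν]; exact_mod_cast leastExponent_inv_nonpos harch hβ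
    linarith [homogenization_le hsub β⁻¹, homogenization_inv hsub hinv β]
end

section
/- Let G be a group, T an element of the center of G, P a subset of G, and K an integer such that: (totality) for every β ∈ G either β ∈ P or β⁻¹T^K ∈ P; (transitivity) P is multiplicatively closed, i.e. a, b ∈ P implies ab ∈ P; (Archimedean) for every β ∈ G there is an integer k_β with β⁻¹T^{k_β} ∈ P and β⁻¹T^l ∉ P for every integer l ≤ −k_β. Then every homogeneous quasimorphism f : G → ℝ with f(T) = 1 that is bounded below on P in fact satisfies f(β) ≥ 0 for all β ∈ P and has defect at most K + 1, i.e. |f(ab) − f(a) − f(b)| ≤ K + 1 for all a, b ∈ G. -/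
/-- Any homogeneous quasimorphism with `f T = 1` that is bounded below on `P`
is in fact nonnegative on `P` and has defect at most `K + 1`. -/
theorem dtc_bounded_below_nonneg_and_defect {G : Type*} [Group G] (T : G)
    (hT : T ∈ Subgroup.center G) (P : Set G) (K : ℤ)
    (htot : ∀ β : G, β ∈ P ∨ β⁻¹ * T ^ K ∈ P)
    (hmul : ∀ a b : G, a ∈ P → b ∈ P → a * b ∈ P)
    (harch : ∀ β : G, ∃ k : ℤ, β⁻¹ * T ^ k ∈ P ∧ ∀ l : ℤ, l ≤ -k → β⁻¹ * T ^ l ∉ P)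
    (f : G → ℝ)
    (hfq : ∃ D : ℝ, 0 ≤ D ∧ ∀ a b : G, |f (a * b) - f a - f b| ≤ D)
    (hfh : ∀ (x : G) (k : ℤ), f (x ^ k) = k * f x)
    (hfT : f T = 1)
    (hfb : ∃ C : ℝ, ∀ β ∈ P, C ≤ f β) :
    (∀ β ∈ P, 0 ≤ f β) ∧
    (∀ a b : G, |f (a * b) - f a - f b| ≤ (K : ℝ) + 1) := by
  obtain ⟨D, hD0, hD⟩ := hfq
  obtain ⟨C, hC⟩ := hfb
  have hcommute : ∀ g : G, Commute g T := fun g => Subgroup.mem_center_iff.mp hT g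
  -- basic facts about f
  have fpow_nat : ∀ (g : G) (n : ℕ), f (g ^ n) = n * f g := by
    intro g n
    have h := hfh g (n : ℤ)
    rwa [zpow_natCast, Int.cast_natCast] at h
  have finv : ∀ g : G, f g⁻¹ = - f g := by
    intro g
    have h := hfh g (-1)
    rw [zpow_neg_one] at h
    simpa using h
  have fT : ∀ s : ℤ, f (T ^ s) = (s : ℝ) := by
    intro s
    rw [hfh T s, hfT, mul_one]
  -- squeeze lemma
  have squeeze : ∀ (z E : ℝ), (∀ n : ℕ, (n : ℝ) * |z| ≤ E) → z = 0 := by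
    intro z E h
    by_contra hne
    have hzpos : 0 < |z| := abs_pos.mpr hne
    obtain ⟨n, hn⟩ := exists_nat_gt (E / |z|)
    have h1 : (n : ℝ) * |z| ≤ E := h n
    have h2 : E / |z| * |z| < (n : ℝ) * |z| := mul_lt_mul_of_pos_right hn hzpos
    rw [div_mul_cancel₀ E (ne_of_gt hzpos)] at h2
    linarith
  -- floor existence helper
  have floorex : ∀ a : ℝ, ∃ p : ℤ, a < (p : ℝ) ∧ (p : ℝ) ≤ a + 1 := by
    intro a
    refine ⟨⌊a⌋ + 1, ?_, ?_⟩
    · push_cast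
      linarith [Int.lt_floor_add_one a]
    · push_cast
      linarith [Int.floor_le a]
  -- part 1 : nonnegativity on P
  have hPpow : ∀ β ∈ P, ∀ n : ℕ, β ^ (n + 1) ∈ P := by
    intro β hβ n
    induction n with
    | zero => simpa using hβ
    | succ m ih =>
      have h2 := hmul _ _ ih hβ
      rwa [← pow_succ] at h2
  have hP0 : ∀ β ∈ P, 0 ≤ f β := by
    intro β hβ
    by_contra hneg
    push_neg at hneg
    obtain ⟨n, hn⟩ := exists_nat_gt (C / f β)
    have hfn : f (β ^ (n + 1)) = ((n : ℝ) + 1) * f β := by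
      rw [fpow_nat]; push_cast; ring
    have hCle := hC _ (hPpow β hβ n)
    rw [hfn] at hCle
    have h1 : C / f β < (n : ℝ) + 1 := by linarith
    have hlt : ((n : ℝ) + 1) * f β < C := by
      calc ((n : ℝ) + 1) * f β < (C / f β) * f β := mul_lt_mul_of_neg_right h1 hneg
        _ = C := div_mul_cancel₀ C (ne_of_lt hneg)
    linarith
  -- shift identity : f (T^s * u) = s + f u
  have fshift : ∀ (s : ℤ) (u : G), f (T ^ s * u) = (s : ℝ) + f u := by
    intro s u
    have hc : Commute (T ^ s) u := ((hcommute u).zpow_right s).symm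
    have key : ∀ n : ℕ, (T ^ s * u) ^ n = T ^ (s * (n : ℤ)) * u ^ n := by
      intro n
      rw [hc.mul_pow]
      congr 1
      rw [← zpow_natCast (T ^ s) n, ← zpow_mul]
    have hb : ∀ n : ℕ, (n : ℝ) * |f (T ^ s * u) - ((s : ℝ) + f u)| ≤ D := by
      intro n
      have h2 := hD (T ^ (s * (n : ℤ))) (u ^ n)
      rw [← key n, fpow_nat, fT, fpow_nat] at h2
      have h4 : (n : ℝ) * |f (T ^ s * u) - ((s : ℝ) + f u)|
          = |(n : ℝ) * (f (T ^ s * u) - ((s : ℝ) + f u))| := by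
        rw [abs_mul, abs_of_nonneg (show (0:ℝ) ≤ (n:ℝ) from n.cast_nonneg)]
      rw [h4]
      have h5 : (n : ℝ) * (f (T ^ s * u) - ((s : ℝ) + f u))
          = (n : ℝ) * f (T ^ s * u) - ((s * (n : ℤ) : ℤ) : ℝ) - (n : ℝ) * f u := by
        push_cast
        ring
      rw [h5]
      exact h2
    have hz := squeeze _ D hb
    linarith
  -- conjugation invariance
  have fconj : ∀ (g w : G), f (g * w * g⁻¹) = f w := by
    intro g w
    have key : ∀ n : ℕ, (g * w * g⁻¹) ^ n = g * w ^ n * g⁻¹ := by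
      intro n
      induction n with
      | zero => simp
      | succ m ih => rw [pow_succ, ih, pow_succ]; group
    have hb : ∀ n : ℕ, (n : ℝ) * |f (g * w * g⁻¹) - f w| ≤ D + D := by
      intro n
      have h2 := hD (g * w ^ n) g⁻¹
      rw [show g * w ^ n * g⁻¹ = (g * w * g⁻¹) ^ n from (key n).symm, fpow_nat, finv] at h2
      have h3 := hD g (w ^ n)
      rw [fpow_nat] at h3
      have h4 : (n : ℝ) * |f (g * w * g⁻¹) - f w|
          = |(n : ℝ) * (f (g * w * g⁻¹) - f w)| := by
        rw [abs_mul, abs_of_nonneg (show (0:ℝ) ≤ (n:ℝ) from n.cast_nonneg)]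
      rw [h4]
      calc |(n : ℝ) * (f (g * w * g⁻¹) - f w)|
          = |((n : ℝ) * f (g * w * g⁻¹) - f (g * w ^ n) - (- f g))
              + (f (g * w ^ n) - f g - (n : ℝ) * f w)| := by
            congr 1
            ring
        _ ≤ |(n : ℝ) * f (g * w * g⁻¹) - f (g * w ^ n) - (- f g)|
              + |f (g * w ^ n) - f g - (n : ℝ) * f w| := abs_add_le _ _
        _ ≤ D + D := add_le_add h2 h3
    have hz := squeeze _ (D + D) hb
    linarith
  -- multiplication of shifted elements
  have key_mul : ∀ (s t : ℤ) (u v : G),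
      (T ^ s * u) * (T ^ t * v) = T ^ (s + t) * (u * v) := by
    intro s t u v
    have h1 : u * T ^ t = T ^ t * u := ((hcommute u).zpow_right t).eq
    calc (T ^ s * u) * (T ^ t * v) = T ^ s * ((u * T ^ t) * v) := by group
      _ = T ^ s * ((T ^ t * u) * v) := by rw [h1]
      _ = T ^ (s + t) * (u * v) := by group
  -- membership lemma : if p + f w > K then T^p * w ∈ P
  have hmem : ∀ (p : ℤ) (w : G), (K : ℝ) < (p : ℝ) + f w → T ^ p * w ∈ P := by
    intro p w hpw
    rcases htot (T ^ p * w) with h | h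
    · exact h
    · exfalso
      have h0 := hP0 _ h
      have he : (T ^ p * w)⁻¹ * T ^ K = T ^ (K - p) * w⁻¹ := by
        have hc : w⁻¹ * T ^ (K - p) = T ^ (K - p) * w⁻¹ := ((hcommute w⁻¹).zpow_right _).eq
        calc (T ^ p * w)⁻¹ * T ^ K = w⁻¹ * (T ^ (-p) * T ^ K) := by
              rw [mul_inv_rev, ← zpow_neg, mul_assoc]
          _ = w⁻¹ * T ^ (K - p) := by rw [← zpow_add, neg_add_eq_sub]
          _ = T ^ (K - p) * w⁻¹ := hc
      rw [he, fshift, finv] at h0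
      push_cast at h0
      linarith
  -- main upper bound
  have main_upper : ∀ x y : G, f (x * y) - f x - f y ≤ (K : ℝ) + 1 := by
    intro x y
    by_contra hcon
    push_neg at hcon
    have hεpos : 0 < f (x * y) - f x - f y - ((K : ℝ) + 1) := by linarith
    obtain ⟨n, hn⟩ := exists_nat_gt
      (2 * |(K : ℝ) + 1| / (f (x * y) - f x - f y - ((K : ℝ) + 1)))
    obtain ⟨q, hq_lt, hq_le⟩ := floorex ((K : ℝ) - f (x * y))
    obtain ⟨p, hp_lt, hp_le⟩ := floorex ((K : ℝ) + ((n : ℝ) + 1) * f x)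
    obtain ⟨r, hr_lt, hr_le⟩ := floorex ((K : ℝ) + ((n : ℝ) + 1) * f y)
    have hq1 : (K : ℝ) < (q : ℝ) + f (x * y) := by linarith
    -- induction : T^(q*(m+1)) * (x^(m+1) * y^(m+1)) ∈ P
    have hH : ∀ m : ℕ, T ^ (q * ((m : ℤ) + 1)) * (x ^ (m + 1) * y ^ (m + 1)) ∈ P := by
      intro m
      induction m with
      | zero =>
        have h := hmem q (x * y) hq1
        simpa using h
      | succ m ih =>
        have h1 : (K : ℝ) < (q : ℝ) + f (x ^ (m + 1) * (x * y) * (x ^ (m + 1))⁻¹) := by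
          rw [fconj]; exact hq1
        have h2 := hmul _ _ (hmem q _ h1) ih
        rw [key_mul] at h2
        have e1 : q + q * ((m : ℤ) + 1) = q * (((m + 1 : ℕ) : ℤ) + 1) := by push_cast; ring
        have e2 : (x ^ (m + 1) * (x * y) * (x ^ (m + 1))⁻¹) * (x ^ (m + 1) * y ^ (m + 1))
            = x ^ (m + 1 + 1) * y ^ (m + 1 + 1) := by group
        rw [e1, e2] at h2
        exact h2
    -- assemble
    have hfxN : f ((x ^ (n + 1))⁻¹) = -(((n : ℝ) + 1) * f x) := by
      rw [finv, fpow_nat]; push_cast; ring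
    have hfyN : f ((y ^ (n + 1))⁻¹) = -(((n : ℝ) + 1) * f y) := by
      rw [finv, fpow_nat]; push_cast; ring
    have hPx := hmem p ((x ^ (n + 1))⁻¹) (by rw [hfxN]; linarith)
    have hPy := hmem r ((y ^ (n + 1))⁻¹) (by rw [hfyN]; linarith)
    have hW1 := hmul _ _ hPx (hH n)
    rw [key_mul] at hW1
    have hW2 := hmul _ _ hW1 hPy
    rw [key_mul] at hW2
    have hg2 : ((x ^ (n + 1))⁻¹ * (x ^ (n + 1) * y ^ (n + 1))) * (y ^ (n + 1))⁻¹ = 1 := by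
      group
    rw [hg2, mul_one] at hW2
    have h0 := hP0 _ hW2
    rw [fT] at h0
    push_cast at h0
    -- h0 : 0 ≤ p + q * (n+1) + r
    have hNnn : (0 : ℝ) ≤ (n : ℝ) + 1 := by positivity
    have hqN : (q : ℝ) * ((n : ℝ) + 1) ≤ ((K : ℝ) - f (x * y) + 1) * ((n : ℝ) + 1) :=
      mul_le_mul_of_nonneg_right hq_le hNnn
    have hNε : 2 * |(K : ℝ) + 1| < ((n : ℝ) + 1) * (f (x * y) - f x - f y - ((K : ℝ) + 1)) := by
      have h1 : 2 * |(K : ℝ) + 1| / (f (x * y) - f x - f y - ((K : ℝ) + 1)) < (n : ℝ) + 1 := by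
        linarith
      calc 2 * |(K : ℝ) + 1|
          = (2 * |(K : ℝ) + 1| / (f (x * y) - f x - f y - ((K : ℝ) + 1)))
              * (f (x * y) - f x - f y - ((K : ℝ) + 1)) :=
            (div_mul_cancel₀ _ (ne_of_gt hεpos)).symm
        _ < ((n : ℝ) + 1) * (f (x * y) - f x - f y - ((K : ℝ) + 1)) :=
            mul_lt_mul_of_pos_right h1 hεpos
    have habs : 2 * ((K : ℝ) + 1) ≤ 2 * |(K : ℝ) + 1| := by
      have := le_abs_self ((K : ℝ) + 1); linarith
    nlinarith [h0, hp_le, hr_le, hqN, hNε, habs]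
  -- conclude
  refine ⟨hP0, ?_⟩
  intro a b
  have h1 := main_upper a b
  have h2 := main_upper b⁻¹ a⁻¹
  have h3 : f (b⁻¹ * a⁻¹) = - f (a * b) := by rw [← mul_inv_rev, finv]
  rw [h3, finv, finv] at h2
  rw [abs_le]
  constructor <;> linarith
end

section
/- Let G be a group, T an element of the center of G, P a subset of G, and K an integer such that: (totality) for every β ∈ G either β ∈ P or β⁻¹T^K ∈ P; (transitivity) P is multiplicatively closed, i.e. a, b ∈ P implies ab ∈ P; (Archimedean) for every β ∈ G there is an integer k_β with β⁻¹T^{k_β} ∈ P and β⁻¹T^l ∉ P for every integer l ≤ −k_β. Then for every β ∈ G the set {k ∈ ℤ : T^{−k}β ∈ P} is nonempty and bounded above; writing ⌊β⌋ for its maximum (the floor of β), the resulting function G → ℤ satisfies 0 ≤ ⌊αβ⌋ − ⌊α⌋ − ⌊β⌋ ≤ K + 1 for all α, β ∈ G. -/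
/-- The floor `⌊β⌋ = max {k : ℤ | T^(-k) * β ∈ P}` is well defined and defines a
superadditive quasimorphism of defect at most `K + 1`. -/
theorem dtc_floor_superadditive {G : Type*} [Group G] (T : G)
    (hT : T ∈ Subgroup.center G) (P : Set G) (K : ℤ)
    (htot : ∀ β : G, β ∈ P ∨ β⁻¹ * T ^ K ∈ P)
    (hmul : ∀ a b : G, a ∈ P → b ∈ P → a * b ∈ P)
    (harch : ∀ β : G, ∃ k : ℤ, β⁻¹ * T ^ k ∈ P ∧ ∀ l : ℤ, l ≤ -k → β⁻¹ * T ^ l ∉ P) :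
    (∀ β : G, {k : ℤ | T ^ (-k) * β ∈ P}.Nonempty ∧ BddAbove {k : ℤ | T ^ (-k) * β ∈ P}) ∧
    (∀ fl : G → ℤ, (∀ β : G, IsGreatest {k : ℤ | T ^ (-k) * β ∈ P} (fl β)) →
      ∀ α β : G, 0 ≤ fl (α * β) - fl α - fl β ∧ fl (α * β) - fl α - fl β ≤ K + 1) := by
  have comm : ∀ (k : ℤ) (g : G), T ^ k * g = g * T ^ k := fun k g =>
    ((Subgroup.mem_center_iff.mp (Subgroup.zpow_mem _ hT k)) g).symm
  have aux : ∀ (j k : ℤ) (g h : G), (T ^ j * g) * (T ^ k * h) = T ^ (j + k) * (g * h) := by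
    intro j k g h
    rw [mul_assoc, ← mul_assoc g, ← comm, zpow_add]
    group
  constructor
  · intro β
    constructor
    · obtain ⟨k, hk, -⟩ := harch β⁻¹
      refine ⟨-k, ?_⟩
      simpa [Set.mem_setOf_eq, neg_neg, inv_inv, comm k β] using hk
    · obtain ⟨k0, hk0, -⟩ := harch β
      obtain ⟨k1, -, hk1⟩ := harch 1
      refine ⟨k0 + k1, fun m hm => ?_⟩
      by_contra hle
      push_neg at hle
      have hmem : T ^ (k0 - m) * 1 ∈ P := by
        have := hmul _ _ hm hk0
        have heq : (T ^ (-m) * β) * (β⁻¹ * T ^ k0) = T ^ (k0 - m) * 1 := by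
          rw [← comm k0 β⁻¹, aux]
          group
        rwa [heq] at this
      have : (1 : G)⁻¹ * T ^ (k0 - m) ∈ P := by
        simpa [comm] using hmem
      exact hk1 (k0 - m) (by omega) this
  · intro fl hfl α β
    have ha := (hfl α).1
    have hb := (hfl β).1
    have hab := (hfl (α * β)).1
    constructor
    · have hmem : T ^ (-(fl α + fl β)) * (α * β) ∈ P := by
        have := hmul _ _ ha hb
        rw [aux] at this
        rw [neg_add]
        exact this
      have := (hfl (α * β)).2 hmem
      omega
    · -- b + 1 is not in the set for β, so totality gives β⁻¹ * T^(fl β + 1 + K) ∈ P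
      have hnb : T ^ (-(fl β + 1)) * β ∉ P := by
        intro h
        have := (hfl β).2 h
        omega
      rcases htot (T ^ (-(fl β + 1)) * β) with h | h
      · exact absurd h hnb
      · have hy : T ^ (fl β + 1 + K) * β⁻¹ ∈ P := by
          have heq : (T ^ (-(fl β + 1)) * β)⁻¹ * T ^ K = T ^ (fl β + 1 + K) * β⁻¹ := by
            rw [mul_inv_rev, ← zpow_neg, neg_neg, mul_assoc, ← zpow_add, ← comm]
          rwa [heq] at h
        have hmem : T ^ (-(fl (α * β)) + (fl β + 1 + K)) * α ∈ P := by
          have := hmul _ _ hab hy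
          rw [aux] at this
          simpa [mul_assoc] using this
        have hmem' : T ^ (-(fl (α * β) - fl β - 1 - K)) * α ∈ P := by
          have : -(fl (α * β)) + (fl β + 1 + K) = -(fl (α * β) - fl β - 1 - K) := by ring
          rwa [this] at hmem
        have := (hfl α).2 hmem'
        omega
end

section
/- Let G be a group acting faithfully on a linearly ordered set Ω such that for every g ∈ G the map x ↦ g•x is monotone (hence an order-automorphism of Ω). Then G is left-orderable: there exists a strict total order ≺ on G such that a ≺ b implies ga ≺ gb for all g, a, b ∈ G. -/
/-!
Well-order `Ω` arbitrarily and compare `a, b ∈ G` by the sign of `a • x` versus `b • x` at the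
first point `x` where they differ. This is the lexicographic order on `Ω → Ω` pulled back along
the orbit map `g ↦ (g • ·)`, which is injective by faithfulness; it is left-invariant because
acting by `g` on the left post-composes both functions with the same strictly monotone map,
which changes neither the first point of difference nor the sign there.
-/

open Function

namespace Pi

variable {ι β γ : Type*}

theorem isStrictTotalOrder_lex (r : ι → ι → Prop) [IsWellOrder ι r] [LinearOrder β] :
    IsStrictTotalOrder (ι → β) (Pi.Lex r (· < ·)) := by
  let := IsWellOrder.linearOrder r
  exact inferInstanceAs (IsStrictTotalOrder (Lex (ι → β)) (· < ·))

theorem lex_comp_of_strictMono {r : ι → ι → Prop} [Preorder β] [Preorder γ] {φ : β → γ}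
    (hφ : StrictMono φ) {x y : ι → β} (h : Pi.Lex r (· < ·) x y) :
    Pi.Lex r (· < ·) (φ ∘ x) (φ ∘ y) := by
  obtain ⟨i, heq, hlt⟩ := h
  exact ⟨i, fun j hj => congrArg φ (heq j hj), hφ hlt⟩

end Pi

/-- A group acting faithfully by monotone maps on a linearly ordered set is
left-orderable. -/
theorem leftOrderable_of_faithful_monotone_action {G Ω : Type*} [Group G]
    [LinearOrder Ω] [MulAction G Ω]
    (hmono : ∀ g : G, Monotone (fun x : Ω => g • x))
    (hfaith : ∀ g : G, (∀ x : Ω, g • x = x) → g = 1) :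
    ∃ lt : G → G → Prop, IsStrictTotalOrder G lt ∧
      ∀ g a b : G, lt a b → lt (g * a) (g * b) := by
  have : FaithfulSMul G Ω := faithfulSMul_iff.mpr hfaith
  have : IsStrictTotalOrder (Ω → Ω) (Pi.Lex WellOrderingRel (· < ·)) :=
    Pi.isStrictTotalOrder_lex WellOrderingRel
  refine ⟨Pi.Lex WellOrderingRel (· < ·) on (fun (g : G) (x : Ω) => g • x),
    smul_left_injective'.isStrictTotalOrder_onFun _, fun g a b hab => ?_⟩
  have hg : StrictMono (fun x : Ω => g • x) :=
    (hmono g).strictMono_of_injective (MulAction.injective g)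
  simpa only [onFun, mul_smul, comp_def] using Pi.lex_comp_of_strictMono hg hab
end

section
/- Let G be a group equipped with a left-invariant strict total order < (so a < b implies ga < gb for all g), and let T be an element of the center of G with 1 < T that is cofinal, i.e. for every g ∈ G there is n ∈ ℕ with g < T^n. Let Q be the quotient group of G by the (normal, since T is central) subgroup generated by T. Then Q is left-circularly orderable: there exists a ternary relation c on Q such that (cyclicity) c(a,b,d) implies c(b,d,a); (asymmetry) c(a,b,d) implies not c(d,b,a); (transitivity) c(a,b,d) and c(a,d,e) imply c(a,b,e); (totality) if a, b, d are pairwise distinct then c(a,b,d) or c(d,b,a); and (left-invariance) c(a,b,d) implies c(qa,qb,qd) for every q ∈ Q. -/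
/-!
Think of `G ⧸ ⟨T⟩` as a circle: declare `x, y, z` cyclically ordered when they have lifts
`a < b < d < T * a`. Since `T` is central, multiplying by powers of `T` preserves the order and
commutes with left multiplication, which gives cyclicity and left-invariance at once. Since
`1 < T` is cofinal, every class has exactly one lift in each window `[a, T * a)`; fixing a lift `a`
of `x`, the cyclic order of `x, y, z` is the linear order of the lifts of `y, z` in that window,
and asymmetry, transitivity and totality are inherited from it.
-/

open QuotientGroup Subgroup

section Central

variable {G : Type*} [Group G] {T : G}

theorem QuotientGroup.mk_eq_mk_iff_exists_zpow_mul (hT : T ∈ center G) {a b : G} :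
    (a : G ⧸ zpowers T) = b ↔ ∃ k : ℤ, T ^ k * a = b := by
  rw [QuotientGroup.eq, mem_zpowers_iff]
  refine exists_congr fun k => ?_
  rw [← mem_center_iff.mp (zpow_mem hT k) a, eq_inv_mul_iff_mul_eq]

theorem QuotientGroup.mk_zpow_mul (hT : T ∈ center G) (k : ℤ) (a : G) :
    ((T ^ k * a : G) : G ⧸ zpowers T) = a :=
  ((mk_eq_mk_iff_exists_zpow_mul hT).2 ⟨k, rfl⟩).symm

end Central

section LeftOrdered

variable {G : Type*} [Group G] [LinearOrder G] [MulLeftMono G] {T : G}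

theorem zpow_right_strictMono' (hT1 : 1 < T) : StrictMono fun n : ℤ => T ^ n :=
  strictMono_int_of_lt_succ fun n => by
    simpa only [zpow_add_one, mul_one] using mul_lt_mul_right hT1 (T ^ n)

theorem zpow_mul_lt_zpow_mul_iff (hT : T ∈ center G) (hT1 : 1 < T) {j k : ℤ} (a : G) :
    T ^ j * a < T ^ k * a ↔ j < k := by
  rw [← mem_center_iff.mp (zpow_mem hT j) a, ← mem_center_iff.mp (zpow_mem hT k) a,
    mul_lt_mul_iff_left, (zpow_right_strictMono' hT1).lt_iff_lt]

theorem exists_zpow_le_lt (hT : T ∈ center G) (hT1 : 1 < T)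
    (hcof : ∀ g : G, ∃ n : ℕ, g < T ^ n) (g : G) :
    ∃ k : ℤ, T ^ k ≤ g ∧ g < T ^ (k + 1) := by
  obtain ⟨n, hn⟩ := hcof g
  obtain ⟨m, hm⟩ := hcof g⁻¹
  have hbdd : ∀ k : ℤ, T ^ k ≤ g → k ≤ n := fun k hk =>
    ((zpow_right_strictMono' hT1).lt_iff_lt.1 (hk.trans_lt (by simpa using hn))).le
  have hlow : T ^ (-(m : ℤ)) ≤ g := by
    have := mul_lt_mul_right hm (T ^ (-(m : ℤ)) * g)
    rw [mul_inv_cancel_right, mul_assoc, ← zpow_natCast, mem_center_iff.mp (zpow_mem hT _) g,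
      ← mul_assoc, ← zpow_add, neg_add_cancel, zpow_zero, one_mul] at this
    exact this.le
  obtain ⟨k, hk, hmax⟩ := Int.exists_greatest_of_bdd ⟨n, hbdd⟩ ⟨_, hlow⟩
  exact ⟨k, hk, lt_of_not_ge fun h => by linarith [hmax _ h]⟩

theorem exists_zpow_mul_mem_Ico (hT : T ∈ center G) (hT1 : 1 < T)
    (hcof : ∀ g : G, ∃ n : ℕ, g < T ^ n) (a g : G) :
    ∃ k : ℤ, T ^ k * g ∈ Set.Ico a (T * a) := by
  obtain ⟨k, hk, hk'⟩ := exists_zpow_le_lt hT hT1 hcof (a⁻¹ * g)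
  have hshift : T ^ (-k) * g = a * ((T ^ k)⁻¹ * (a⁻¹ * g)) := by
    rw [← zpow_neg, ← mul_assoc, mem_center_iff.mp (zpow_mem hT _) a, mul_assoc,
      mul_inv_cancel_left]
  refine ⟨-k, ?_, ?_⟩
  · rw [hshift, le_mul_iff_one_le_right', le_inv_mul_iff_mul_le, mul_one]
    exact hk
  · rw [hshift, ← mem_center_iff.mp hT a, mul_lt_mul_iff_left, inv_mul_lt_iff_lt_mul,
      ← zpow_add_one]
    exact hk'

theorem exists_mk_eq_mem_Ico (hT : T ∈ center G) (hT1 : 1 < T)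
    (hcof : ∀ g : G, ∃ n : ℕ, g < T ^ n) (a : G) (y : G ⧸ zpowers T) :
    ∃ b ∈ Set.Ico a (T * a), (b : G ⧸ zpowers T) = y := by
  obtain ⟨g, rfl⟩ := mk_surjective y
  obtain ⟨k, hk⟩ := exists_zpow_mul_mem_Ico hT hT1 hcof a g
  exact ⟨_, hk, mk_zpow_mul hT k g⟩

theorem eq_of_mk_eq_of_mem_Ico (hT : T ∈ center G) (hT1 : 1 < T) {a b b' : G}
    (hb : b ∈ Set.Ico a (T * a)) (hb' : b' ∈ Set.Ico a (T * a))
    (h : (b : G ⧸ zpowers T) = b') : b = b' := by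
  obtain ⟨k, rfl⟩ := (mk_eq_mk_iff_exists_zpow_mul hT).1 h
  have hk1 : k < 1 := by
    rw [← zpow_mul_lt_zpow_mul_iff hT hT1 a, zpow_one]
    exact (mul_le_mul_right hb.1 _).trans_lt hb'.2
  have hk0 : 0 < k + 1 := by
    rw [← zpow_mul_lt_zpow_mul_iff hT hT1 a, zpow_zero, one_mul, zpow_add_one, mul_assoc]
    exact hb'.1.trans_lt (mul_lt_mul_right hb.2 _)
  obtain rfl : k = 0 := by omega
  rw [zpow_zero, one_mul]

variable (T) in
def quotientSbtw (x y z : G ⧸ zpowers T) : Prop :=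
  ∃ a b d : G, (a : G ⧸ zpowers T) = x ∧ (b : G ⧸ zpowers T) = y ∧ (d : G ⧸ zpowers T) = z ∧
    a < b ∧ b < d ∧ d < T * a

theorem quotientSbtw_iff_of_mk_eq (hT : T ∈ center G) {a : G} {x y z : G ⧸ zpowers T}
    (hx : (a : G ⧸ zpowers T) = x) :
    quotientSbtw T x y z ↔ ∃ b d : G, (b : G ⧸ zpowers T) = y ∧ (d : G ⧸ zpowers T) = z ∧
      a < b ∧ b < d ∧ d < T * a := by
  refine ⟨?_, fun ⟨b, d, hb, hd, h⟩ => ⟨a, b, d, hx, hb, hd, h⟩⟩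
  rintro ⟨a', b, d, ha', rfl, rfl, hab, hbd, hda⟩
  obtain ⟨k, rfl⟩ := (mk_eq_mk_iff_exists_zpow_mul hT).1 (ha'.trans hx.symm)
  refine ⟨T ^ k * b, T ^ k * d, mk_zpow_mul hT k b, mk_zpow_mul hT k d,
    mul_lt_mul_right hab _, mul_lt_mul_right hbd _, ?_⟩
  calc T ^ k * d < T ^ k * (T * a') := mul_lt_mul_right hda _
    _ = T * (T ^ k * a') := by rw [← mul_assoc, ← mul_assoc, (Commute.self_zpow T k).eq]

namespace quotientSbtw

variable {x y z w : G ⧸ zpowers T}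

theorem cyclic (hT : T ∈ center G) (h : quotientSbtw T x y z) : quotientSbtw T y z x := by
  obtain ⟨a, b, d, rfl, rfl, rfl, hab, hbd, hda⟩ := h
  exact ⟨b, d, T * a, rfl, rfl, by simpa using mk_zpow_mul hT 1 a, hbd, hda,
    mul_lt_mul_right hab T⟩

theorem not_symm (hT : T ∈ center G) (hT1 : 1 < T) (h : quotientSbtw T x y z) :
    ¬ quotientSbtw T z y x := by
  obtain ⟨a, b, d, rfl, rfl, rfl, hab, hbd, hda⟩ := h
  intro h'
  obtain ⟨d', b', hd', hb', had', hdb', hba⟩ :=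
    (quotientSbtw_iff_of_mk_eq hT rfl).1 ((h'.cyclic hT).cyclic hT)
  have hbIco : b ∈ Set.Ico a (T * a) := ⟨hab.le, hbd.trans hda⟩
  have hdIco : d ∈ Set.Ico a (T * a) := ⟨(hab.trans hbd).le, hda⟩
  have hb : b = b' := eq_of_mk_eq_of_mem_Ico hT hT1 hbIco ⟨(had'.trans hdb').le, hba⟩ hb'.symm
  have hd : d = d' := eq_of_mk_eq_of_mem_Ico hT hT1 hdIco ⟨had'.le, hdb'.trans hba⟩ hd'.symm
  subst hb hd
  exact hbd.not_gt hdb'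

theorem trans (hT : T ∈ center G) (hT1 : 1 < T) (h : quotientSbtw T x y z)
    (h' : quotientSbtw T x z w) : quotientSbtw T x y w := by
  obtain ⟨a, b, d, rfl, rfl, rfl, hab, hbd, hda⟩ := h
  obtain ⟨d', e, hd', he, had', hde, hea⟩ := (quotientSbtw_iff_of_mk_eq hT rfl).1 h'
  obtain rfl := eq_of_mk_eq_of_mem_Ico hT hT1 ⟨(hab.trans hbd).le, hda⟩
    ⟨had'.le, hde.trans hea⟩ hd'.symm
  exact ⟨a, b, e, rfl, rfl, he, hab, hbd.trans hde, hea⟩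

theorem smul (hT : T ∈ center G) (q : G) (h : quotientSbtw T x y z) :
    quotientSbtw T (q • x) (q • y) (q • z) := by
  obtain ⟨a, b, d, rfl, rfl, rfl, hab, hbd, hda⟩ := h
  refine ⟨q * a, q * b, q * d, rfl, rfl, rfl, mul_lt_mul_right hab q, mul_lt_mul_right hbd q, ?_⟩
  calc q * d < q * (T * a) := mul_lt_mul_right hda q
    _ = T * (q * a) := by rw [← mul_assoc, mem_center_iff.mp hT q, mul_assoc]

end quotientSbtw

theorem quotientSbtw_or_quotientSbtw (hT : T ∈ center G) (hT1 : 1 < T)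
    (hcof : ∀ g : G, ∃ n : ℕ, g < T ^ n) {x y z : G ⧸ zpowers T}
    (hxy : x ≠ y) (hyz : y ≠ z) (hxz : x ≠ z) :
    quotientSbtw T x y z ∨ quotientSbtw T z y x := by
  obtain ⟨a, rfl⟩ := mk_surjective x
  obtain ⟨b, ⟨hab, hba⟩, rfl⟩ := exists_mk_eq_mem_Ico hT hT1 hcof a y
  obtain ⟨d, ⟨had, hda⟩, rfl⟩ := exists_mk_eq_mem_Ico hT hT1 hcof a z
  have hab : a < b := hab.lt_of_ne (by rintro rfl; exact hxy rfl)
  have had : a < d := had.lt_of_ne (by rintro rfl; exact hxz rfl)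
  rcases lt_or_gt_of_ne (show b ≠ d by rintro rfl; exact hyz rfl) with hbd | hdb
  · exact Or.inl ⟨a, b, d, rfl, rfl, rfl, hab, hbd, hda⟩
  · exact Or.inr (quotientSbtw.cyclic hT ⟨a, d, b, rfl, rfl, rfl, had, hdb, hba⟩)

end LeftOrdered

/-- If `T` is a central, positive, cofinal element for a left-invariant strict
total order on `G`, then the quotient `G / ⟨T⟩` is left-circularly orderable. -/
theorem quotient_by_central_cofinal_circularly_orderable {G : Type*} [Group G]
    (lt : G → G → Prop) (hsto : IsStrictTotalOrder G lt)
    (hlinv : ∀ g a b : G, lt a b → lt (g * a) (g * b))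
    (T : G) (hT : T ∈ Subgroup.center G) (hTpos : lt 1 T)
    (hcof : ∀ g : G, ∃ n : ℕ, lt g (T ^ n)) :
    ∃ c : (G ⧸ Subgroup.zpowers T) → (G ⧸ Subgroup.zpowers T) →
          (G ⧸ Subgroup.zpowers T) → Prop,
      (∀ a b d, c a b d → c b d a) ∧
      (∀ a b d, c a b d → ¬ c d b a) ∧
      (∀ a b d e, c a b d → c a d e → c a b e) ∧
      (∀ a b d, a ≠ b → b ≠ d → a ≠ d → c a b d ∨ c d b a) ∧
      (∀ q a b d : G,
        c (QuotientGroup.mk a) (QuotientGroup.mk b) (QuotientGroup.mk d) →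
        c (QuotientGroup.mk (q * a)) (QuotientGroup.mk (q * b))
          (QuotientGroup.mk (q * d))) := by
  classical
  let _ : LinearOrder G := linearOrderOfSTO lt
  have : MulLeftStrictMono G := ⟨fun g _ _ h => hlinv g _ _ h⟩
  have := mulLeftMono_of_mulLeftStrictMono G
  exact ⟨quotientSbtw T, fun _ _ _ => quotientSbtw.cyclic hT,
    fun _ _ _ => quotientSbtw.not_symm hT hTpos, fun _ _ _ _ => quotientSbtw.trans hT hTpos,
    fun _ _ _ => quotientSbtw_or_quotientSbtw hT hTpos hcof,
    fun q _ _ _ => quotientSbtw.smul hT q⟩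
end

section
/- Let G be a group acting on a linearly ordered set Ω such that for every g ∈ G the map x ↦ g•x is monotone, let T be an element of the center of G, fix I ∈ Ω, and set P_I = {g ∈ G : I ≤ g•I}. Assume the Archimedean condition: for every g ∈ G there exists k ∈ ℤ such that I ≤ (T^l g)•I for all integers l ≥ k, and (T^l g)•I < I for all integers l < k. Let f : G → ℝ be a homogeneous quasimorphism with f(T) = 1 that is bounded below on P_I. If r ∈ G satisfies x ≤ r•x for all x ∈ Ω, then f(gh) ≤ f(grh) for all g, h ∈ G. -/
/-- Inserting an element that moves every point to the right can only increase
the value of the Dehn twist coefficient. -/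
theorem dtc_insert_right_veering {G Ω : Type*} [Group G] [LinearOrder Ω]
    [MulAction G Ω]
    (hmono : ∀ g : G, Monotone (fun x : Ω => g • x))
    (T : G) (hT : T ∈ Subgroup.center G) (I : Ω)
    (harch : ∀ g : G, ∃ k : ℤ,
      (∀ l : ℤ, k ≤ l → I ≤ (T ^ l * g) • I) ∧
      (∀ l : ℤ, l < k → (T ^ l * g) • I < I))
    (f : G → ℝ)
    (hfq : ∃ D : ℝ, 0 ≤ D ∧ ∀ a b : G, |f (a * b) - f a - f b| ≤ D)
    (hfh : ∀ (x : G) (k : ℤ), f (x ^ k) = k * f x)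
    (hfT : f T = 1)
    (hfb : ∃ C : ℝ, ∀ g : G, I ≤ g • I → C ≤ f g)
    (r : G) (hr : ∀ x : Ω, x ≤ r • x) :
    ∀ g h : G, f (g * h) ≤ f (g * r * h) := by
  obtain ⟨D, hD0, hD⟩ := hfq
  obtain ⟨C, hC⟩ := hfb
  -- f of inverses
  have hinv : ∀ y : G, f y⁻¹ = - f y := by
    intro y
    have := hfh y (-1)
    rw [zpow_neg_one] at this
    simpa using this
  have hfTl : ∀ l : ℤ, f (T ^ l) = (l : ℝ) := by
    intro l; rw [hfh, hfT, mul_one]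
  -- key: if s moves every point right, then f a ≤ f (s * a)
  have key : ∀ s a : G, (∀ x : Ω, x ≤ s • x) → f a ≤ f (s * a) := by
    intro s a hs
    set b := s * a with hb
    clear_value b
    -- pointwise comparison of powers
    have hpow : ∀ n : ℕ, ∀ x : Ω, a ^ n • x ≤ b ^ n • x := by
      intro n
      induction n with
      | zero => intro x; simp
      | succ n ih =>
        intro x
        have h1 : a ^ n • x ≤ b ^ n • x := ih x
        have h2 : b • (a ^ n • x) ≤ b • (b ^ n • x) := hmono b h1
        have h3 : a • (a ^ n • x) ≤ b • (a ^ n • x) := by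
          have := hs (a • (a ^ n • x))
          calc a • (a ^ n • x) ≤ s • (a • (a ^ n • x)) := this
            _ = b • (a ^ n • x) := by rw [hb, mul_smul]
        calc a ^ (n+1) • x = a • (a ^ n • x) := by rw [pow_succ', mul_smul]
          _ ≤ b • (b ^ n • x) := le_trans h3 h2
          _ = b ^ (n+1) • x := by rw [pow_succ', mul_smul]
    -- main estimate for each n ≥ 1
    have main : ∀ n : ℕ, (n : ℝ) * f a + (2*C - 2*D - 1) ≤ (n : ℝ) * f b := by
      intro n
      obtain ⟨ka, hka1, hka2⟩ := harch (a ^ n)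
      obtain ⟨kb, hkb1, hkb2⟩ := harch (b ^ n)
      -- kb ≤ ka
      have hkba : kb ≤ ka := by
        by_contra hcon
        push_neg at hcon
        have h1 : I ≤ (T ^ ka * a ^ n) • I := hka1 ka le_rfl
        have h2 : (T ^ ka * b ^ n) • I < I := hkb2 ka hcon
        have h3 : (T ^ ka * a ^ n) • I ≤ (T ^ ka * b ^ n) • I := by
          rw [mul_smul, mul_smul]
          exact hmono (T ^ ka) (hpow n I)
        exact absurd (le_trans h1 h3) (not_le.mpr h2)
      -- lower bound for f (b^n)
      have hbn : C - D - (kb : ℝ) ≤ f (b ^ n) := by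
        have h1 : C ≤ f (T ^ kb * b ^ n) := hC _ (hkb1 kb le_rfl)
        have h2 := hD (T ^ kb) (b ^ n)
        have h3 := abs_le.mp h2
        have := hfTl kb
        linarith [h3.2]
      -- upper bound for f (a^n)
      have han : f (a ^ n) ≤ -C + D - (ka : ℝ) + 1 := by
        have h0 : (T ^ (ka - 1) * a ^ n) • I < I := hka2 (ka - 1) (by omega)
        have h1 : I ≤ (T ^ (ka - 1) * a ^ n)⁻¹ • I := by
          have h1' := hmono (T ^ (ka - 1) * a ^ n)⁻¹ (le_of_lt h0)
          simp only [inv_smul_smul] at h1'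
          exact h1'
        have h2 : C ≤ f (T ^ (ka - 1) * a ^ n)⁻¹ := hC _ h1
        rw [hinv] at h2
        have h3 := abs_le.mp (hD (T ^ (ka - 1)) (a ^ n))
        have h4 := hfTl (ka - 1)
        push_cast at h4
        linarith [h3.1]
      have hfa : f (a ^ n) = (n : ℝ) * f a := by
        have := hfh a (n : ℤ)
        rw [zpow_natCast] at this
        simpa using this
      have hfbn : f (b ^ n) = (n : ℝ) * f b := by
        have := hfh b (n : ℤ)
        rw [zpow_natCast] at this
        simpa using this
      have hkk : (kb : ℝ) ≤ (ka : ℝ) := by exact_mod_cast hkba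
      linarith
    -- pass to limit
    by_contra hcon
    push_neg at hcon
    have hε0 : 0 < f a - f b := by linarith
    obtain ⟨n, hn⟩ := exists_nat_gt ((1 + 2*D - 2*C) / (f a - f b))
    have h1 := main n
    have h2 : (n : ℝ) * (f a - f b) ≤ 1 + 2*D - 2*C := by linarith
    have h4 : (1 + 2*D - 2*C) < (n : ℝ) * (f a - f b) := by
      rw [div_lt_iff₀ hε0] at hn; linarith
    linarith
  intro g h
  have hs : ∀ x : Ω, x ≤ (g * r * g⁻¹) • x := by
    intro x
    have h1 : g⁻¹ • x ≤ r • (g⁻¹ • x) := hr _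
    have h2 : g • (g⁻¹ • x) ≤ g • (r • (g⁻¹ • x)) := hmono g h1
    calc x = g • (g⁻¹ • x) := by rw [smul_inv_smul]
      _ ≤ g • (r • (g⁻¹ • x)) := h2
      _ = (g * r * g⁻¹) • x := by rw [mul_smul, mul_smul]
  have := key (g * r * g⁻¹) (g * h) hs
  have heq : g * r * g⁻¹ * (g * h) = g * r * h := by group
  rwa [heq] at this
end

section
/- Let G be a group acting on a linearly ordered set Ω such that for every g ∈ G the map x ↦ g•x is monotone, let T be an element of the center of G, fix I ∈ Ω, and set P_I = {g ∈ G : I ≤ g•I}. Assume the Archimedean condition: for every g ∈ G there exists k ∈ ℤ such that I ≤ (T^l g)•I for all integers l ≥ k, and (T^l g)•I < I for all integers l < k. Let f : G → ℝ be a homogeneous quasimorphism with f(T) = 1 that is bounded below on P_I. Then for every g ∈ G with f(g) > 0 one has I < g•I. -/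
/-- An element with strictly positive Dehn twist coefficient moves `I`
strictly to the right. -/
theorem dtc_pos_implies_right_veering {G Ω : Type*} [Group G] [LinearOrder Ω]
    [MulAction G Ω]
    (hmono : ∀ g : G, Monotone (fun x : Ω => g • x))
    (T : G) (hT : T ∈ Subgroup.center G) (I : Ω)
    (harch : ∀ g : G, ∃ k : ℤ,
      (∀ l : ℤ, k ≤ l → I ≤ (T ^ l * g) • I) ∧
      (∀ l : ℤ, l < k → (T ^ l * g) • I < I))
    (f : G → ℝ)
    (hfq : ∃ D : ℝ, 0 ≤ D ∧ ∀ a b : G, |f (a * b) - f a - f b| ≤ D)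
    (hfh : ∀ (x : G) (k : ℤ), f (x ^ k) = k * f x)
    (hfT : f T = 1)
    (hfb : ∃ C : ℝ, ∀ g : G, I ≤ g • I → C ≤ f g) :
    ∀ g : G, 0 < f g → I < g • I := by
  obtain ⟨D, hD0, hDq⟩ := hfq
  obtain ⟨C, hC⟩ := hfb
  intro g hfg
  by_contra hle
  push_neg at hle
  -- gⁿ • I ≤ I for all n
  have hgn : ∀ n : ℕ, g ^ n • I ≤ I := by
    intro n
    induction n with
    | zero => simp
    | succ n ih =>
      calc g ^ (n + 1) • I = g ^ n • (g • I) := by rw [smul_smul, ← pow_succ]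
      _ ≤ g ^ n • I := hmono (g ^ n) hle
      _ ≤ I := ih
  -- T⁻¹ • I < I
  have hTinv : T⁻¹ • I < I := by
    by_contra h
    push_neg at h
    have hpow : ∀ m : ℕ, I ≤ (T⁻¹) ^ m • I := by
      intro m
      induction m with
      | zero => simp
      | succ m ih =>
        have := hmono T⁻¹ ih
        calc I ≤ T⁻¹ • I := h
        _ ≤ T⁻¹ • ((T⁻¹) ^ m • I) := this
        _ = (T⁻¹) ^ (m + 1) • I := by rw [smul_smul, pow_succ']
    obtain ⟨m, hm⟩ := exists_nat_gt (-C)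
    have h1 : C ≤ f ((T⁻¹) ^ m) := hC _ (hpow m)
    have h2 : f ((T⁻¹) ^ m) = -(m : ℝ) := by
      have : (T⁻¹) ^ m = T ^ (-(m : ℤ)) := by
        rw [zpow_neg, zpow_natCast, inv_pow]
      rw [this, hfh T (-(m : ℤ)), hfT]
      push_cast; ring
    rw [h2] at h1
    linarith
  -- T^k • I < I for k ≤ -1
  have hTneg : ∀ k : ℤ, k ≤ -1 → T ^ k • I < I := by
    intro k hk
    have hdec : ∀ m : ℕ, (T⁻¹) ^ (m + 1) • I ≤ T⁻¹ • I := by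
      intro m
      induction m with
      | zero => simp
      | succ m ih =>
        have hstep : (T⁻¹) ^ (m + 2) • I ≤ (T⁻¹) ^ (m + 1) • I := by
          have := hmono ((T⁻¹) ^ (m + 1)) (le_of_lt hTinv)
          calc (T⁻¹) ^ (m + 2) • I = (T⁻¹) ^ (m + 1) • (T⁻¹ • I) := by
                rw [smul_smul, ← pow_succ]
          _ ≤ (T⁻¹) ^ (m + 1) • I := this
        exact le_trans hstep ih
    set m : ℕ := (-k).toNat with hm
    have hm1 : 1 ≤ m := by omega
    have hkm : k = -(m : ℤ) := by omega
    have hTk : T ^ k = (T⁻¹) ^ m := by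
      rw [hkm, zpow_neg, zpow_natCast, inv_pow]
    rw [hTk]
    obtain ⟨m', hm'⟩ : ∃ m', m = m' + 1 := ⟨m - 1, by omega⟩
    rw [hm']
    exact lt_of_le_of_lt (hdec m') hTinv
  -- main estimate
  have key : ∀ n : ℕ, (n : ℝ) * f g ≤ D - C + 1 := by
    intro n
    obtain ⟨k, hk1, hk2⟩ := harch (g ^ n)
    -- k ≥ 0
    have hk0 : 0 ≤ k := by
      by_contra h
      push_neg at h
      have h1 : I ≤ (T ^ k * g ^ n) • I := hk1 k le_rfl
      have h2 : (T ^ k * g ^ n) • I ≤ T ^ k • I := by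
        rw [mul_smul]
        exact hmono (T ^ k) (hgn n)
      have h3 : T ^ k • I < I := hTneg k (by omega)
      exact absurd (le_trans h1 h2) (not_le.mpr h3)
    -- inverse of T^(k-1) * g^n is in P_I
    have h2 : (T ^ (k - 1) * g ^ n) • I < I := hk2 (k - 1) (by omega)
    have h3 : I ≤ (T ^ (k - 1) * g ^ n)⁻¹ • I := by
      have := hmono (T ^ (k - 1) * g ^ n)⁻¹ (le_of_lt h2)
      simpa only [inv_smul_smul] using this
    have h4 : C ≤ f ((T ^ (k - 1) * g ^ n)⁻¹) := hC _ h3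
    have h5 : f ((T ^ (k - 1) * g ^ n)⁻¹) = -f (T ^ (k - 1) * g ^ n) := by
      have := hfh (T ^ (k - 1) * g ^ n) (-1)
      simpa using this
    have h6 : f (T ^ (k - 1) * g ^ n) ≤ -C := by linarith [h4, h5.symm ▸ h4]
    have hq := hDq (T ^ (k - 1)) (g ^ n)
    have hfTk : f (T ^ (k - 1)) = (k : ℝ) - 1 := by
      rw [hfh T (k - 1), hfT]; push_cast; ring
    have hfgn : f (g ^ n) = (n : ℝ) * f g := by
      have : g ^ n = g ^ (n : ℤ) := by rw [zpow_natCast]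
      rw [this, hfh g n]; push_cast; ring
    rw [abs_le] at hq
    have hk0' : (0 : ℝ) ≤ (k : ℝ) := by exact_mod_cast hk0
    linarith [hq.1, hq.2]
  obtain ⟨n, hn⟩ := exists_nat_gt ((D - C + 1) / f g)
  have := key n
  have h7 : (D - C + 1) / f g * f g < (n : ℝ) * f g := by
    exact mul_lt_mul_of_pos_right hn hfg
  rw [div_mul_cancel₀ _ (ne_of_gt hfg)] at h7
  linarith
end

section
/- Let G be a group, T an element of the center of G, P a subset of G, and f : G → ℝ a homogeneous quasimorphism with f(T) = 1 and f(β) ≥ 0 for all β ∈ P. Then for all β ∈ G and all integers k, m: if T^{−k}β ∈ P then f(β) ≥ k, and if β⁻¹T^m ∈ P then f(β) ≤ m; in particular, if both hold then k ≤ f(β) ≤ m. -/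
/-- A homogeneous quasimorphism is additive on commuting elements. -/
lemma dtc_hqm_add_of_commute {G : Type*} [Group G] (f : G → ℝ)
    (hfq : ∃ D : ℝ, 0 ≤ D ∧ ∀ a b : G, |f (a * b) - f a - f b| ≤ D)
    (hfh : ∀ (x : G) (k : ℤ), f (x ^ k) = k * f x)
    {a b : G} (hab : Commute a b) : f (a * b) = f a + f b := by
  obtain ⟨D, hD0, hD⟩ := hfq
  set x := f (a * b) - f a - f b with hx
  have key : ∀ n : ℕ, (n : ℝ) * |x| ≤ D := by
    intro n
    have h1 : (a * b) ^ (n : ℤ) = a ^ (n : ℤ) * b ^ (n : ℤ) := hab.mul_zpow n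
    have h2 := hD (a ^ (n : ℤ)) (b ^ (n : ℤ))
    rw [← h1, hfh (a * b) n, hfh a n, hfh b n] at h2
    push_cast at h2
    have h3 : (n : ℝ) * f (a * b) - (n : ℝ) * f a - (n : ℝ) * f b = (n : ℝ) * x := by
      rw [hx]; ring
    rw [h3, abs_mul, abs_of_nonneg (by positivity : (0:ℝ) ≤ (n:ℝ))] at h2
    exact h2
  have hx0 : x = 0 := by
    by_contra h
    have habs : 0 < |x| := abs_pos.mpr h
    obtain ⟨n, hn⟩ := exists_nat_gt (D / |x|)
    have h4 := key n
    rw [div_lt_iff₀ habs] at hn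
    linarith
  rw [hx] at hx0
  linarith

/-- A homogeneous quasimorphism with `f T = 1` that is nonnegative on the set
of positive elements `P` is squeezed between the powers of `T` comparable to a
given element. -/
theorem dtc_squeeze_between_powers {G : Type*} [Group G] (T : G)
    (hT : T ∈ Subgroup.center G) (P : Set G)
    (f : G → ℝ)
    (hfq : ∃ D : ℝ, 0 ≤ D ∧ ∀ a b : G, |f (a * b) - f a - f b| ≤ D)
    (hfh : ∀ (x : G) (k : ℤ), f (x ^ k) = k * f x)
    (hfT : f T = 1)
    (hfP : ∀ β ∈ P, 0 ≤ f β) :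
    ∀ (β : G) (k m : ℤ),
      (T ^ (-k) * β ∈ P → (k : ℝ) ≤ f β) ∧
      (β⁻¹ * T ^ m ∈ P → f β ≤ (m : ℝ)) := by
  intro β k m
  have hcomm : ∀ g : G, Commute T g := fun g =>
    ((Subgroup.mem_center_iff.mp hT g)).symm
  have hinv : f β⁻¹ = - f β := by
    have := hfh β (-1); simpa using this
  constructor
  · intro hmem
    have hc : Commute (T ^ (-k)) β := (hcomm β).zpow_left (-k)
    have := hfP _ hmem
    rw [dtc_hqm_add_of_commute f hfq hfh hc, hfh T (-k), hfT] at this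
    push_cast at this ⊢
    linarith
  · intro hmem
    have hc : Commute β⁻¹ (T ^ m) := ((hcomm β⁻¹).zpow_left m).symm
    have := hfP _ hmem
    rw [dtc_hqm_add_of_commute f hfq hfh hc, hfh T m, hfT, hinv] at this
    linarith
end
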